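/- Let T₀ : [0,1] → [0,1] be Borel measurable, ρ : ℝ → ℝ a Lipschitz probability density supported in [−1,1], and ρ' : ℝ → ℝ bounded measurable such that ρ is differentiable a.e. with derivative ρ'. Let L₀ be the integral operator on L²([0,1]) with the reflected-noise kernel k₀ of (T₀, ρ); assume L₀ satisfies the mixing condition (A1), and let f₀ be its unique fixed point with ∫ f₀ dm = 1. Fix ℓ > 0 and set F̃_ℓ := {x ∈ [0,1] : ℓ ≤ T₀(x) ≤ 1 − ℓ}. Define G : L² → L² by (G h)(y) := ∫₀¹ [ Σ_{i∈ℤ} ( ρ'(2i + x − T₀(y)) + ρ'(2i − x − T₀(y)) ) ] h(x) dx. Let c ∈ L² with ⟨c, f₀⟩ = 0, and let w ∈ L² satisfy ⟨w, f₀⟩ = 0 and w − L₀* w = c, where L₀* is the Hilbert adjoint of L₀. Assume there exists F' ⊆ F̃_ℓ with m(F') > 0 such that f₀(y) > 0 and (G w)(y) ≠ 0 for every y ∈ F'. Define M := 𝟙_{F̃_ℓ}·f₀·(G w). Then M is essentially bounded, ‖M‖₂ > 0, and Ṫ := −M/‖M‖₂ is the unique minimizer of the functional h ↦ ∫₀¹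 f₀(y)(G w)(y) h(y) dy over the set {h ∈ L² : h = 0 a.e. on [0,1] \ F̃_ℓ and ‖h‖₂ = 1}. (This functional equals −⟨c, R̂(h)⟩, minus the linear response of the expectation of c to the map perturbation h, so Ṫ maximizes that response.) -/

import Mathlib

open MeasureTheory
open scoped RealInnerProductSpace

/-- Lebesgue measure restricted to the unit interval `[0,1]`. -/
noncomputable def μ01 : Measure ℝ := volume.restrict (Set.Icc (0 : ℝ) 1)

/-- The reflected-noise kernel of a map `T` and a noise density `ρ`:
`k(x,y) = Σ_{i∈ℤ} (ρ(2i + x − T(y)) + ρ(2i − x − T(y)))`. -/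
noncomputable def reflKernel (T : ℝ → ℝ) (ρ : ℝ → ℝ) (x y : ℝ) : ℝ :=
  ∑' i : ℤ, (ρ (2 * i + x - T y) + ρ (2 * i - x - T y))

/-- The operator `G` given by
`(G h)(y) = ∫₀¹ [Σ_{i∈ℤ} (ρ'(2i + x − T₀(y)) + ρ'(2i − x − T₀(y)))] h(x) dx`. -/
noncomputable def Gfun (T₀ : ℝ → ℝ) (ρ' : ℝ → ℝ) (h : ℝ → ℝ) (y : ℝ) : ℝ :=
  ∫ x, (∑' i : ℤ, (ρ' (2 * i + x - T₀ y) + ρ' (2 * i - x - T₀ y))) * h x ∂μ01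

/-- The set `F̃_ℓ = {x ∈ [0,1] : ℓ ≤ T₀(x) ≤ 1 − ℓ}`. -/
def Ftilde (T₀ : ℝ → ℝ) (ℓ : ℝ) : Set ℝ :=
  {x | x ∈ Set.Icc (0 : ℝ) 1 ∧ ℓ ≤ T₀ x ∧ T₀ x ≤ 1 - ℓ}

/-!
The kernel of `L₀` is bounded (ρ is Lipschitz and vanishes off `[-1,1]`), so the fixed point
`f₀ = L₀ f₀` is essentially bounded. Since `ρ` vanishes on the open set `ℝ \ [-1,1]`, so does `ρ'`
almost everywhere; after replacing `ρ'` by `𝟙_[-1,1] ρ'`, only the terms `i ∈ {-1,0,1}` of the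
periodised kernel survive, and `G w` is bounded wherever `T₀ y ∈ [0,1]`. Hence `M ∈ L²`, and
`M ≠ 0` because it does not vanish on `F'`. For `h` supported in `F̃_ℓ` the functional is `⟪M, h⟫`,
so by the equality case of Cauchy–Schwarz its unique minimiser on the unit sphere is `-M/‖M‖`,
which is itself supported in `F̃_ℓ`.
-/

open Set

instance isFiniteMeasure_μ01 : IsFiniteMeasure μ01 := by
  unfold μ01
  infer_instance

theorem measurableSet_Ftilde {T : ℝ → ℝ} (hT : Measurable T) (ℓ : ℝ) :
    MeasurableSet (Ftilde T ℓ) :=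
  measurableSet_Icc.inter
    ((measurableSet_le measurable_const hT).inter (measurableSet_le hT measurable_const))

theorem abs_le_three_mul_of_lipschitzWith {ρ : ℝ → ℝ} {K : NNReal} (hρ : LipschitzWith K ρ)
    (hsupp : ∀ x, x ∉ Icc (-1 : ℝ) 1 → ρ x = 0) (s : ℝ) : |ρ s| ≤ 3 * K := by
  by_cases hs : s ∈ Icc (-1 : ℝ) 1
  · have h2 : ρ 2 = 0 := hsupp 2 (by norm_num)
    have := hρ.dist_le_mul s 2
    rw [Real.dist_eq, Real.dist_eq, h2, sub_zero] at this
    have hs2 : |s - 2| ≤ 3 := abs_le.2 ⟨by linarith [hs.1], by linarith [hs.2]⟩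
    nlinarith [K.coe_nonneg]
  · rw [hsupp s hs, abs_zero]
    positivity

theorem ae_eq_indicator_of_hasDerivAt {ρ ρ' : ℝ → ℝ} {s : Set ℝ} {μ : Measure ℝ}
    (hs : IsClosed s) (hsupp : ∀ x, x ∉ s → ρ x = 0) (hderiv : ∀ᵐ x ∂μ, HasDerivAt ρ (ρ' x) x) :
    ρ' =ᵐ[μ] s.indicator ρ' := by
  filter_upwards [hderiv] with x hx
  by_cases hxs : x ∈ s
  · rw [indicator_of_mem hxs]
  · have hzero : ρ =ᶠ[nhds x] fun _ => 0 :=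
      Filter.eventually_of_mem (hs.isOpen_compl.mem_nhds hxs) hsupp
    rw [indicator_of_notMem hxs]
    exact hx.unique ((hasDerivAt_const x 0).congr_of_eventuallyEq hzero)

theorem reflKernel_summand_eq_zero {g : ℝ → ℝ} (hg : ∀ u, u ∉ Icc (-1 : ℝ) 1 → g u = 0)
    {x t : ℝ} (hx : x ∈ Icc (0 : ℝ) 1) (ht : t ∈ Icc (0 : ℝ) 1) {i : ℤ}
    (hi : i ∉ ({-1, 0, 1} : Finset ℤ)) : g (2 * i + x - t) + g (2 * i - x - t) = 0 := by
  simp only [Finset.mem_insert, Finset.mem_singleton, not_or] at hi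
  have hi' : (2 : ℝ) ≤ i ∨ (i : ℝ) ≤ -2 := by
    have : 2 ≤ i ∨ i ≤ -2 := by omega
    exact_mod_cast this
  obtain ⟨hx0, hx1⟩ := hx
  obtain ⟨ht0, ht1⟩ := ht
  rw [hg _ fun hu => ?_, hg _ fun hu => ?_, add_zero] <;>
    obtain ⟨hu0, hu1⟩ := hu <;> rcases hi' with h | h <;> linarith

theorem abs_reflKernel_le {T g : ℝ → ℝ} {B : ℝ} (hg : ∀ u, u ∉ Icc (-1 : ℝ) 1 → g u = 0)
    (hgB : ∀ u, |g u| ≤ B) {x y : ℝ} (hx : x ∈ Icc (0 : ℝ) 1) (hy : T y ∈ Icc (0 : ℝ) 1) :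
    |reflKernel T g x y| ≤ 6 * B := by
  rw [reflKernel, tsum_eq_sum fun i hi => reflKernel_summand_eq_zero hg hx hy hi]
  calc |∑ i ∈ ({-1, 0, 1} : Finset ℤ), (g (2 * i + x - T y) + g (2 * i - x - T y))|
      ≤ ∑ i ∈ ({-1, 0, 1} : Finset ℤ), |g (2 * i + x - T y) + g (2 * i - x - T y)| :=
        Finset.abs_sum_le_sum_abs _ _
    _ ≤ ∑ _i ∈ ({-1, 0, 1} : Finset ℤ), 2 * B :=
        Finset.sum_le_sum fun i _ =>
          (abs_add_le _ _).trans (by linarith [hgB (2 * i + x - T y), hgB (2 * i - x - T y)])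
    _ = 6 * B := by rw [Finset.sum_const, nsmul_eq_mul]; norm_num; ring

theorem reflKernel_ae_congr {g₁ g₂ : ℝ → ℝ} (hg : g₁ =ᵐ[volume] g₂) (T : ℝ → ℝ) (y : ℝ) :
    (fun x => reflKernel T g₁ x y) =ᵐ[volume] fun x => reflKernel T g₂ x y := by
  have hplus : ∀ i : ℤ, ∀ᵐ x, g₁ (2 * i + x - T y) = g₂ (2 * i + x - T y) := fun i => by
    filter_upwards [(measurePreserving_add_left volume (2 * i - T y)).quasiMeasurePreserving
      |>.ae_eq_comp hg] with x hx
    simpa [add_sub_right_comm] using hx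
  have hminus : ∀ i : ℤ, ∀ᵐ x, g₁ (2 * i - x - T y) = g₂ (2 * i - x - T y) := fun i => by
    filter_upwards [(Measure.measurePreserving_sub_left volume (2 * i - T y)).quasiMeasurePreserving
      |>.ae_eq_comp hg] with x hx
    simpa [sub_right_comm] using hx
  filter_upwards [ae_all_iff.2 hplus, ae_all_iff.2 hminus] with x hp hm
  exact tsum_congr fun i => by rw [hp i, hm i]

theorem Gfun_eq_integral_reflKernel (T g h : ℝ → ℝ) (y : ℝ) :
    Gfun T g h y = ∫ x, reflKernel T g x y * h x ∂μ01 :=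
  rfl

theorem Gfun_congr_ae {g₁ g₂ : ℝ → ℝ} (hg : g₁ =ᵐ[volume] g₂) (T h : ℝ → ℝ) :
    Gfun T g₁ h = Gfun T g₂ h := by
  ext y
  simp only [Gfun_eq_integral_reflKernel]
  refine integral_congr_ae ?_
  filter_upwards [ae_restrict_of_ae (reflKernel_ae_congr hg T y)] with x hx
  rw [hx]

theorem aestronglyMeasurable_Gfun {T g h : ℝ → ℝ} (hT : Measurable T) (hg : Measurable g)
    (hh : AEStronglyMeasurable h μ01) : AEStronglyMeasurable (Gfun T g h) μ01 := by
  have hk : StronglyMeasurable fun p : ℝ × ℝ => reflKernel T g p.2 p.1 :=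
    StronglyMeasurable.tsum fun i => by fun_prop
  exact AEStronglyMeasurable.integral_prod_right' (f := fun p => reflKernel T g p.2 p.1 * h p.2)
    (hk.aestronglyMeasurable.mul
      (hh.comp_quasiMeasurePreserving Measure.quasiMeasurePreserving_snd))

theorem abs_integral_mul_le_of_ae_abs_le {α : Type*} [MeasurableSpace α] {μ : Measure α}
    {k f : α → ℝ} {B : ℝ} (hk : ∀ᵐ y ∂μ, |k y| ≤ B) (hf : Integrable f μ) :
    |∫ y, k y * f y ∂μ| ≤ B * ∫ y, |f y| ∂μ := by
  rw [← integral_const_mul, ← Real.norm_eq_abs]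
  refine norm_integral_le_of_norm_le (hf.abs.const_mul B) ?_
  filter_upwards [hk] with y hy
  rw [Real.norm_eq_abs, abs_mul]
  exact mul_le_mul_of_nonneg_right hy (abs_nonneg _)

theorem abs_Gfun_le {T g h : ℝ → ℝ} {B : ℝ} (hg : ∀ u, u ∉ Icc (-1 : ℝ) 1 → g u = 0)
    (hgB : ∀ u, |g u| ≤ B) (hh : Integrable h μ01) {y : ℝ} (hy : T y ∈ Icc (0 : ℝ) 1) :
    |Gfun T g h y| ≤ 6 * B * ∫ x, |h x| ∂μ01 :=
  abs_integral_mul_le_of_ae_abs_le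
    ((ae_restrict_mem measurableSet_Icc).mono fun _ hx => abs_reflKernel_le hg hgB hx hy) hh

theorem abs_Gfun_le_of_hasDerivAt {T ρ ρ' h : ℝ → ℝ} {C : ℝ}
    (hsupp : ∀ x, x ∉ Icc (-1 : ℝ) 1 → ρ x = 0) (hderiv : ∀ᵐ x, HasDerivAt ρ (ρ' x) x)
    (hC : ∀ x, |ρ' x| ≤ C) (hh : Integrable h μ01) {y : ℝ} (hy : T y ∈ Icc (0 : ℝ) 1) :
    |Gfun T ρ' h y| ≤ 6 * C * ∫ x, |h x| ∂μ01 := by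
  rw [Gfun_congr_ae (ae_eq_indicator_of_hasDerivAt isClosed_Icc hsupp hderiv)]
  refine abs_Gfun_le (fun u hu => indicator_of_notMem hu ρ') (fun u => ?_) hh hy
  simpa only [Real.norm_eq_abs] using (norm_indicator_le_norm_self ρ' u).trans (hC u)

theorem ae_abs_le_of_eq_integral_reflKernel {T g f : ℝ → ℝ} {B : ℝ}
    (hT : MapsTo T (Icc (0 : ℝ) 1) (Icc (0 : ℝ) 1)) (hg : ∀ u, u ∉ Icc (-1 : ℝ) 1 → g u = 0)
    (hgB : ∀ u, |g u| ≤ B) (hf : Integrable f μ01)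
    (hfix : ∀ᵐ x ∂μ01, f x = ∫ y, reflKernel T g x y * f y ∂μ01) :
    ∀ᵐ x ∂μ01, |f x| ≤ 6 * B * ∫ y, |f y| ∂μ01 := by
  filter_upwards [hfix, ae_restrict_mem measurableSet_Icc] with x hfx hx
  rw [hfx]
  exact abs_integral_mul_le_of_ae_abs_le
    ((ae_restrict_mem measurableSet_Icc).mono fun _ hy => abs_reflKernel_le hg hgB hx (hT hy)) hf

theorem ae_abs_indicator_mul_le {α : Type*} [MeasurableSpace α] {μ : Measure α} {s : Set α}
    {f g : α → ℝ} {a b : ℝ} (hf : ∀ᵐ y ∂μ, |f y| ≤ a) (hg : ∀ y ∈ s, |g y| ≤ b) (hb : 0 ≤ b) :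
    ∀ᵐ y ∂μ, |s.indicator (fun y => f y * g y) y| ≤ a * b := by
  filter_upwards [hf] with y hy
  by_cases hys : y ∈ s
  · rw [indicator_of_mem hys, abs_mul]
    exact mul_le_mul hy (hg y hys) (abs_nonneg _) ((abs_nonneg _).trans hy)
  · rw [indicator_of_notMem hys, abs_zero]
    exact mul_nonneg ((abs_nonneg _).trans hy) hb

theorem eLpNorm_ne_zero_of_ne_zero_on {α : Type*} [MeasurableSpace α] {μ : Measure α}
    {f : α → ℝ} {p : ENNReal} {t : Set α} (hf : AEStronglyMeasurable f μ) (hp : p ≠ 0)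
    (ht : μ t ≠ 0) (hft : ∀ y ∈ t, f y ≠ 0) : eLpNorm f p μ ≠ 0 := by
  rw [Ne, eLpNorm_eq_zero_iff hf hp]
  intro hzero
  exact ht (measure_mono_null hft (ae_iff.1 hzero))

section InnerProduct

variable {E : Type*} [NormedAddCommGroup E] [InnerProductSpace ℝ E]

theorem inner_neg_inv_norm_smul_self (m : E) : ⟪m, -(‖m‖⁻¹) • m⟫ = -‖m‖ := by
  rcases eq_or_ne m 0 with rfl | hm
  · simp
  rw [real_inner_smul_right, real_inner_self_eq_norm_mul_norm]
  field_simp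

theorem neg_norm_le_inner_of_norm_eq_one (m : E) {h : E} (hh : ‖h‖ = 1) : -‖m‖ ≤ ⟪m, h⟫ := by
  simpa [hh] using neg_le_of_abs_le (abs_real_inner_le_norm m h)

theorem eq_neg_inv_norm_smul_of_inner_le {m h : E} (hm : m ≠ 0) (hh : ‖h‖ = 1)
    (hle : ⟪m, h⟫ ≤ -‖m‖) : h = -(‖m‖⁻¹) • m := by
  have hinner : ⟪-m, h⟫ = ‖-m‖ * ‖h‖ := by
    rw [inner_neg_left, norm_neg, hh, mul_one]
    linarith [neg_norm_le_inner_of_norm_eq_one m hh]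
  have hparallel : -m = ‖m‖ • h := by
    simpa [hh] using inner_eq_norm_mul_iff_real.1 hinner
  rw [neg_smul, ← smul_neg, hparallel, smul_smul, inv_mul_cancel₀ (norm_ne_zero_iff.2 hm),
    one_smul]

end InnerProduct

theorem integral_mul_eq_inner_toLp_indicator {α : Type*} [MeasurableSpace α] {μ : Measure α}
    {s : Set α} {φ : α → ℝ} (hM : MemLp (s.indicator φ) 2 μ) {h : Lp ℝ 2 μ}
    (hh : ∀ᵐ y ∂μ, y ∉ s → h y = 0) : ∫ y, φ y * h y ∂μ = ⟪hM.toLp _, h⟫ := by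
  rw [L2.inner_def]
  refine integral_congr_ae ?_
  filter_upwards [hM.coeFn_toLp, hh] with y hMy hhy
  rw [RCLike.inner_apply, conj_trivial, hMy]
  by_cases hys : y ∈ s
  · rw [indicator_of_mem hys, mul_comm]
  · rw [indicator_of_notMem hys, hhy hys, mul_zero, zero_mul]

theorem exists_minimizer_integral_mul_of_indicator {α : Type*} [MeasurableSpace α]
    {μ : Measure α} {s : Set α} {φ : α → ℝ} (hM : MemLp (s.indicator φ) 2 μ)
    (hM0 : eLpNorm (s.indicator φ) 2 μ ≠ 0) :
    ∃ Tdot : Lp ℝ 2 μ,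
      (∀ᵐ y ∂μ, Tdot y = -(s.indicator φ y) / (eLpNorm (s.indicator φ) 2 μ).toReal) ∧
      (∀ᵐ y ∂μ, y ∉ s → Tdot y = 0) ∧ ‖Tdot‖ = 1 ∧
      (∀ h : Lp ℝ 2 μ, (∀ᵐ y ∂μ, y ∉ s → h y = 0) → ‖h‖ = 1 →
          ∫ y, φ y * Tdot y ∂μ ≤ ∫ y, φ y * h y ∂μ) ∧
      (∀ h : Lp ℝ 2 μ, (∀ᵐ y ∂μ, y ∉ s → h y = 0) → ‖h‖ = 1 →
        (∀ h' : Lp ℝ 2 μ, (∀ᵐ y ∂μ, y ∉ s → h' y = 0) → ‖h'‖ = 1 →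
            ∫ y, φ y * h y ∂μ ≤ ∫ y, φ y * h' y ∂μ) →
        h = Tdot) := by
  set m := hM.toLp _
  have hm_norm : ‖m‖ = (eLpNorm (s.indicator φ) 2 μ).toReal := Lp.norm_toLp _ _
  have hm0 : m ≠ 0 := by
    rw [← norm_ne_zero_iff, hm_norm]
    exact ENNReal.toReal_ne_zero.2 ⟨hM0, hM.eLpNorm_ne_top⟩
  have hTdot : ∀ᵐ y ∂μ, (-(‖m‖⁻¹) • m) y = -(s.indicator φ y) / ‖m‖ := by
    filter_upwards [Lp.coeFn_smul (-(‖m‖⁻¹)) m, hM.coeFn_toLp] with y hsmul hmy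
    rw [hsmul, Pi.smul_apply, hmy, smul_eq_mul]
    ring
  have hTdot_supp : ∀ᵐ y ∂μ, y ∉ s → (-(‖m‖⁻¹) • m) y = 0 := by
    filter_upwards [hTdot] with y hy hys
    rw [hy, indicator_of_notMem hys, neg_zero, zero_div]
  have hTdot_norm : ‖-(‖m‖⁻¹) • m‖ = 1 := by
    rw [norm_smul, norm_neg, norm_inv, norm_norm, inv_mul_cancel₀ (norm_ne_zero_iff.2 hm0)]
  refine ⟨-(‖m‖⁻¹) • m, hm_norm ▸ hTdot, hTdot_supp, hTdot_norm, fun h hh h1 => ?_,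
    fun h hh h1 hmin => ?_⟩
  · rw [integral_mul_eq_inner_toLp_indicator hM hTdot_supp,
      integral_mul_eq_inner_toLp_indicator hM hh, inner_neg_inv_norm_smul_self]
    exact neg_norm_le_inner_of_norm_eq_one m h1
  · refine eq_neg_inv_norm_smul_of_inner_le hm0 h1 ?_
    have := hmin _ hTdot_supp hTdot_norm
    rwa [integral_mul_eq_inner_toLp_indicator hM hTdot_supp,
      integral_mul_eq_inner_toLp_indicator hM hh, inner_neg_inv_norm_smul_self] at this

theorem optimal_map_perturbation_for_expectation_general
    (T₀ : ℝ → ℝ) (hT₀meas : Measurable T₀)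
    (hT₀maps : Set.MapsTo T₀ (Set.Icc (0 : ℝ) 1) (Set.Icc (0 : ℝ) 1))
    (ρ : ℝ → ℝ) (K : NNReal) (hρLip : LipschitzWith K ρ)
    (hρsupp : ∀ x, x ∉ Set.Icc (-1 : ℝ) 1 → ρ x = 0)
    (ρ' : ℝ → ℝ) (hρ'meas : Measurable ρ') (hρ'bdd : ∃ C : ℝ, ∀ x, |ρ' x| ≤ C)
    (hρ'deriv : ∀ᵐ x, HasDerivAt ρ (ρ' x) x)
    (L₀ : Lp ℝ 2 μ01 →L[ℝ] Lp ℝ 2 μ01)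
    (hL₀ : ∀ f : Lp ℝ 2 μ01,
      ∀ᵐ x ∂μ01, (L₀ f) x = ∫ y, reflKernel T₀ ρ x y * f y ∂μ01)
    (f₀ : Lp ℝ 2 μ01) (hf₀fix : L₀ f₀ = f₀)
    (ℓ : ℝ)
    (w : Lp ℝ 2 μ01)
    (F' : Set ℝ) (hF'sub : F' ⊆ Ftilde T₀ ℓ) (hF'pos : 0 < volume F')
    (hf₀pos : ∀ y ∈ F', 0 < f₀ y)
    (hGw : ∀ y ∈ F', Gfun T₀ ρ' (⇑w) y ≠ 0) :
    (∃ C : ℝ, ∀ᵐ y ∂μ01,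
      |(Ftilde T₀ ℓ).indicator (fun y => f₀ y * Gfun T₀ ρ' (⇑w) y) y| ≤ C) ∧
    0 < (eLpNorm ((Ftilde T₀ ℓ).indicator
          (fun y => f₀ y * Gfun T₀ ρ' (⇑w) y)) 2 μ01).toReal ∧
    ∃ Tdot : Lp ℝ 2 μ01,
      (∀ᵐ y ∂μ01, Tdot y =
        -((Ftilde T₀ ℓ).indicator (fun y => f₀ y * Gfun T₀ ρ' (⇑w) y) y) /
          (eLpNorm ((Ftilde T₀ ℓ).indicator
            (fun y => f₀ y * Gfun T₀ ρ' (⇑w) y)) 2 μ01).toReal) ∧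
      (∀ᵐ y ∂μ01, y ∉ Ftilde T₀ ℓ → Tdot y = 0) ∧ ‖Tdot‖ = 1 ∧
      (∀ h : Lp ℝ 2 μ01,
        (∀ᵐ y ∂μ01, y ∉ Ftilde T₀ ℓ → h y = 0) → ‖h‖ = 1 →
          ∫ y, f₀ y * Gfun T₀ ρ' (⇑w) y * Tdot y ∂μ01 ≤
            ∫ y, f₀ y * Gfun T₀ ρ' (⇑w) y * h y ∂μ01) ∧
      (∀ h : Lp ℝ 2 μ01,
        (∀ᵐ y ∂μ01, y ∉ Ftilde T₀ ℓ → h y = 0) → ‖h‖ = 1 →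
        (∀ h' : Lp ℝ 2 μ01,
          (∀ᵐ y ∂μ01, y ∉ Ftilde T₀ ℓ → h' y = 0) → ‖h'‖ = 1 →
            ∫ y, f₀ y * Gfun T₀ ρ' (⇑w) y * h y ∂μ01 ≤
              ∫ y, f₀ y * Gfun T₀ ρ' (⇑w) y * h' y ∂μ01) →
        h = Tdot) := by
  obtain ⟨C, hC⟩ := hρ'bdd
  have hC0 : 0 ≤ C := (abs_nonneg _).trans (hC 0)
  have hf₀_bdd := ae_abs_le_of_eq_integral_reflKernel hT₀maps hρsupp
    (abs_le_three_mul_of_lipschitzWith hρLip hρsupp) ((Lp.memLp f₀).integrable one_le_two)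
    (by simpa only [hf₀fix] using hL₀ f₀)
  have hG_bdd : ∀ y ∈ Ftilde T₀ ℓ, |Gfun T₀ ρ' w y| ≤ 6 * C * ∫ x, |w x| ∂μ01 := fun y hy =>
    abs_Gfun_le_of_hasDerivAt hρsupp hρ'deriv hC ((Lp.memLp w).integrable one_le_two)
      (hT₀maps hy.1)
  set M := (Ftilde T₀ ℓ).indicator fun y => f₀ y * Gfun T₀ ρ' w y with hM_def
  have hM_bdd := ae_abs_indicator_mul_le hf₀_bdd hG_bdd (by positivity)
  have hM_meas : AEStronglyMeasurable M μ01 :=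
    ((Lp.aestronglyMeasurable f₀).mul (aestronglyMeasurable_Gfun hT₀meas hρ'meas
      (Lp.aestronglyMeasurable w))).indicator (measurableSet_Ftilde hT₀meas ℓ)
  have hM_mem : MemLp M 2 μ01 :=
    MemLp.of_bound hM_meas _ (hM_bdd.mono fun y hy => by rwa [Real.norm_eq_abs])
  have hF'_ne : μ01 F' ≠ 0 := by
    rw [μ01, Measure.restrict_eq_self _ fun y hy => (hF'sub hy).1]
    exact hF'pos.ne'
  have hM_ne : eLpNorm M 2 μ01 ≠ 0 := eLpNorm_ne_zero_of_ne_zero_on hM_meas two_ne_zero hF'_ne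
    fun y hy => by
      rw [hM_def, indicator_of_mem (hF'sub hy)]
      exact mul_ne_zero (hf₀pos y hy).ne' (hGw y hy)
  exact ⟨⟨_, hM_bdd⟩, ENNReal.toReal_pos hM_ne hM_mem.eLpNorm_ne_top,
    exists_minimizer_integral_mul_of_indicator hM_mem hM_ne⟩

/-- Explicit formula for the unique map perturbation maximising the
linear response of the expectation of an observable `c`, for a deterministic map
with reflected additive noise: with `M = 𝟙_{F̃_ℓ}·f₀·(G w)`, the function `M` is
essentially bounded with `‖M‖₂ > 0`, and `Ṫ = −M/‖M‖₂` is the unique minimizer of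
`h ↦ ∫ f₀ (G w) h` over `{h : h = 0 a.e. off F̃_ℓ, ‖h‖₂ = 1}`. -/
theorem optimal_map_perturbation_for_expectation
    (T₀ : ℝ → ℝ) (hT₀meas : Measurable T₀)
    (hT₀maps : Set.MapsTo T₀ (Set.Icc (0 : ℝ) 1) (Set.Icc (0 : ℝ) 1))
    (ρ : ℝ → ℝ) (K : NNReal) (hρLip : LipschitzWith K ρ)
    (hρnonneg : ∀ x, 0 ≤ ρ x) (hρint : ∫ x, ρ x = 1)
    (hρsupp : ∀ x, x ∉ Set.Icc (-1 : ℝ) 1 → ρ x = 0)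
    (ρ' : ℝ → ℝ) (hρ'meas : Measurable ρ') (hρ'bdd : ∃ C : ℝ, ∀ x, |ρ' x| ≤ C)
    (hρ'deriv : ∀ᵐ x, HasDerivAt ρ (ρ' x) x)
    (L₀ : Lp ℝ 2 μ01 →L[ℝ] Lp ℝ 2 μ01)
    (hL₀ : ∀ f : Lp ℝ 2 μ01,
      ∀ᵐ x ∂μ01, (L₀ f) x = ∫ y, reflKernel T₀ ρ x y * f y ∂μ01)
    (hmix : ∀ g : Lp ℝ 2 μ01, (∫ x, g x ∂μ01) = 0 →
      Filter.Tendsto (fun n : ℕ => ‖(L₀ ^ n) g‖) Filter.atTop (nhds 0))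
    (f₀ : Lp ℝ 2 μ01) (hf₀fix : L₀ f₀ = f₀) (hf₀int : ∫ x, f₀ x ∂μ01 = 1)
    (ℓ : ℝ) (hℓ : 0 < ℓ)
    (c : Lp ℝ 2 μ01) (hc : ⟪c, f₀⟫ = 0)
    (w : Lp ℝ 2 μ01) (hwf₀ : ⟪w, f₀⟫ = 0)
    (hwc : w - (ContinuousLinearMap.adjoint L₀) w = c)
    (F' : Set ℝ) (hF'sub : F' ⊆ Ftilde T₀ ℓ) (hF'pos : 0 < volume F')
    (hf₀pos : ∀ y ∈ F', 0 < f₀ y)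
    (hGw : ∀ y ∈ F', Gfun T₀ ρ' (⇑w) y ≠ 0) :
    (∃ C : ℝ, ∀ᵐ y ∂μ01,
      |(Ftilde T₀ ℓ).indicator (fun y => f₀ y * Gfun T₀ ρ' (⇑w) y) y| ≤ C) ∧
    0 < (eLpNorm ((Ftilde T₀ ℓ).indicator
          (fun y => f₀ y * Gfun T₀ ρ' (⇑w) y)) 2 μ01).toReal ∧
    ∃ Tdot : Lp ℝ 2 μ01,
      (∀ᵐ y ∂μ01, Tdot y =
        -((Ftilde T₀ ℓ).indicator (fun y => f₀ y * Gfun T₀ ρ' (⇑w) y) y) /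
          (eLpNorm ((Ftilde T₀ ℓ).indicator
            (fun y => f₀ y * Gfun T₀ ρ' (⇑w) y)) 2 μ01).toReal) ∧
      (∀ᵐ y ∂μ01, y ∉ Ftilde T₀ ℓ → Tdot y = 0) ∧ ‖Tdot‖ = 1 ∧
      (∀ h : Lp ℝ 2 μ01,
        (∀ᵐ y ∂μ01, y ∉ Ftilde T₀ ℓ → h y = 0) → ‖h‖ = 1 →
          ∫ y, f₀ y * Gfun T₀ ρ' (⇑w) y * Tdot y ∂μ01 ≤
            ∫ y, f₀ y * Gfun T₀ ρ' (⇑w) y * h y ∂μ01) ∧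
      (∀ h : Lp ℝ 2 μ01,
        (∀ᵐ y ∂μ01, y ∉ Ftilde T₀ ℓ → h y = 0) → ‖h‖ = 1 →
        (∀ h' : Lp ℝ 2 μ01,
          (∀ᵐ y ∂μ01, y ∉ Ftilde T₀ ℓ → h' y = 0) → ‖h'‖ = 1 →
            ∫ y, f₀ y * Gfun T₀ ρ' (⇑w) y * h y ∂μ01 ≤
              ∫ y, f₀ y * Gfun T₀ ρ' (⇑w) y * h' y ∂μ01) →
        h = Tdot) :=
  optimal_map_perturbation_for_expectation_general T₀ hT₀meas hT₀maps ρ K hρLip hρsupp ρ' hρ'meas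
    hρ'bdd hρ'deriv L₀ hL₀ f₀ hf₀fix ℓ w F' hF'sub hF'pos hf₀pos hGw
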